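/- arXiv:1812.10862 — 4 statements merged into one kernel-verified Lean document; each statement's English description precedes it below -/
import Mathlib

section
/- The Rényi conditional mutual information of the first kind is bounded between downarrow versions: I₁₊ₛ^↓(Y;Z₁|Z₂) ≤ I₁₊ₛ(Y;Z₁|Z₂) ≤ I_{1/(1-s)}^↓(Y;Z₁|Z₂) for all s in (0, 1). -/
open scoped BigOperators

section
variable {Y Z₁ Z₂ : Type*} [Fintype Y] [Fintype Z₁] [Fintype Z₂]

/-- The Rényi conditional mutual information `I_{1+s}(Y;Z₁|Z₂)` (first kind),
defined by `s · I_{1+s} = log ∑_{z₁,z₂} P(z₁,z₂) ∑_y p(y|z₁,z₂)^{1+s} / p(y|z₂)^s`,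
for a finite output alphabet (the integral becomes a sum). -/
noncomputable def Iup (P : Z₁ × Z₂ → ℝ) (p : Y → Z₁ → Z₂ → ℝ) (s : ℝ) : ℝ :=
  (1 / s) * Real.log (∑ z₁, ∑ z₂, P (z₁, z₂) *
    ∑ y, p y z₁ z₂ ^ (1 + s) /
      ((∑ z₁', (P (z₁', z₂) / ∑ z₁'', P (z₁'', z₂)) * p y z₁' z₂) ^ s))

/-- The downarrow Rényi conditional mutual information `I_α^↓(Y;Z₁|Z₂)` with parameter
`α = 1 + s`, defined by
`(α-1)/α · I_α^↓ = log ∑_{z₂} P(z₂) ∑_y ( ∑_{z₁} P(z₁|z₂) p(y|z₁,z₂)^α )^{1/α}`. -/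
noncomputable def Idown (P : Z₁ × Z₂ → ℝ) (p : Y → Z₁ → Z₂ → ℝ) (α : ℝ) : ℝ :=
  (α / (α - 1)) * Real.log (∑ z₂, (∑ z₁, P (z₁, z₂)) *
    ∑ y, (∑ z₁, (P (z₁, z₂) / ∑ z₁', P (z₁', z₂)) * p y z₁ z₂ ^ α) ^ (1 / α))

/-- Weighted Hölder / interpolation inequality used for the upper bound. -/
lemma aux_holder {ι : Type*} [Fintype ι] (w x : ι → ℝ) (hw : ∀ i, 0 ≤ w i)
    (hx : ∀ i, 0 ≤ x i) {s : ℝ} (hs0 : 0 < s) (hs1 : s < 1)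
    (hF : 0 < ∑ i, w i * x i ^ (1 / (1 - s))) (hG : 0 < ∑ i, w i * x i) :
    ∑ i, w i * x i ^ (1 + s)
      ≤ (∑ i, w i * x i ^ (1 / (1 - s))) ^ (1 - s) * (∑ i, w i * x i) ^ s := by
  set F := ∑ i, w i * x i ^ (1 / (1 - s)) with hFdef
  set G := ∑ i, w i * x i with hGdef
  have h1s : (0:ℝ) < 1 - s := by linarith
  have hC : 0 < F ^ (1 - s) * G ^ s := by positivity
  have key : ∀ i, w i * x i ^ (1 + s) ≤
      F ^ (1 - s) * G ^ s * (w i * ((1 - s) * (x i ^ (1 / (1 - s)) / F) + s * (x i / G))) := by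
    intro i
    have hgm := Real.geom_mean_le_arith_mean2_weighted (w₁ := 1 - s) (w₂ := s)
      (p₁ := x i ^ (1 / (1 - s)) / F) (p₂ := x i / G) h1s.le hs0.le
      (div_nonneg (Real.rpow_nonneg (hx i) _) hF.le) (div_nonneg (hx i) hG.le)
      (by ring)
    have hid : (x i ^ (1 / (1 - s)) / F) ^ (1 - s) * (x i / G) ^ s
        = x i ^ (1 + s) / (F ^ (1 - s) * G ^ s) := by
      rw [Real.div_rpow (Real.rpow_nonneg (hx i) _) hF.le, Real.div_rpow (hx i) hG.le,
        ← Real.rpow_mul (hx i), one_div_mul_cancel h1s.ne',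
        Real.rpow_add' (hx i) (by positivity : (1:ℝ) + s ≠ 0), Real.rpow_one]
      ring
    rw [hid] at hgm
    have h2 := mul_le_mul_of_nonneg_left hgm (mul_nonneg hC.le (hw i))
    calc w i * x i ^ (1 + s)
        = F ^ (1 - s) * G ^ s * w i * (x i ^ (1 + s) / (F ^ (1 - s) * G ^ s)) := by
          field_simp
      _ ≤ F ^ (1 - s) * G ^ s * w i *
            ((1 - s) * (x i ^ (1 / (1 - s)) / F) + s * (x i / G)) := h2
      _ = F ^ (1 - s) * G ^ s *
            (w i * ((1 - s) * (x i ^ (1 / (1 - s)) / F) + s * (x i / G))) := by ring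
  calc ∑ i, w i * x i ^ (1 + s)
      ≤ ∑ i, F ^ (1 - s) * G ^ s *
          (w i * ((1 - s) * (x i ^ (1 / (1 - s)) / F) + s * (x i / G))) :=
        Finset.sum_le_sum fun i _ => key i
    _ = F ^ (1 - s) * G ^ s * ((1 - s) / F * F + s / G * G) := by
        rw [← Finset.mul_sum]
        congr 1
        rw [hFdef, hGdef, Finset.mul_sum, Finset.mul_sum, ← Finset.sum_add_distrib]
        exact Finset.sum_congr rfl fun i _ => by ring
    _ = F ^ (1 - s) * G ^ s := by
        rw [div_mul_cancel₀ _ hF.ne', div_mul_cancel₀ _ hG.ne']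
        ring

/-- Jensen's inequality step for the lower bound. -/
lemma aux_jensen {Y' Z₂' : Type*} [Fintype Y'] [Fintype Z₂'] (Pz : Z₂' → ℝ) (q f : Y' → Z₂' → ℝ)
    (hPz : ∀ z, 0 ≤ Pz z) (hq : ∀ y z, 0 < q y z) (hf : ∀ y z, 0 ≤ f y z)
    (hPzs : ∑ z, Pz z = 1) (hqs : ∀ z, ∑ y, q y z = 1) {s : ℝ} (hs0 : 0 < s) :
    (∑ z, Pz z * ∑ y, f y z ^ (1 / (1 + s))) ^ (1 + s)
      ≤ ∑ z, Pz z * ∑ y, f y z / q y z ^ s := by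
  have h1s : (0:ℝ) < 1 + s := by linarith
  have hmain := Real.rpow_arith_mean_le_arith_mean_rpow Finset.univ
    (fun x : Y' × Z₂' => Pz x.2 * q x.1 x.2)
    (fun x : Y' × Z₂' => f x.1 x.2 ^ (1 / (1 + s)) / q x.1 x.2)
    (fun i _ => mul_nonneg (hPz _) (hq _ _).le)
    (by
      rw [Fintype.sum_prod_type_right]
      have : ∀ z, ∑ y, Pz z * q y z = Pz z := fun z => by
        rw [← Finset.mul_sum, hqs z, mul_one]
      rw [Finset.sum_congr rfl fun z _ => this z, hPzs])
    (fun i _ => div_nonneg (Real.rpow_nonneg (hf _ _) _) (hq _ _).le)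
    (by linarith : (1:ℝ) ≤ 1 + s)
  have E1 : ∑ x : Y' × Z₂', (Pz x.2 * q x.1 x.2) * (f x.1 x.2 ^ (1 / (1 + s)) / q x.1 x.2)
      = ∑ z, Pz z * ∑ y, f y z ^ (1 / (1 + s)) := by
    rw [Fintype.sum_prod_type_right]
    refine Finset.sum_congr rfl fun z _ => ?_
    rw [Finset.mul_sum]
    refine Finset.sum_congr rfl fun y _ => ?_
    field_simp [(hq y z).ne']
  have E2 : ∑ x : Y' × Z₂', (Pz x.2 * q x.1 x.2) * (f x.1 x.2 ^ (1 / (1 + s)) / q x.1 x.2) ^ (1 + s)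
      = ∑ z, Pz z * ∑ y, f y z / q y z ^ s := by
    rw [Fintype.sum_prod_type_right]
    refine Finset.sum_congr rfl fun z _ => ?_
    rw [Finset.mul_sum]
    refine Finset.sum_congr rfl fun y _ => ?_
    rw [Real.div_rpow (Real.rpow_nonneg (hf y z) _) (hq y z).le, ← Real.rpow_mul (hf y z),
      one_div_mul_cancel h1s.ne', Real.rpow_one,
      Real.rpow_add (hq y z) 1 s, Real.rpow_one]
    calc Pz z * q y z * (f y z / (q y z * q y z ^ s))
        = Pz z * (f y z / q y z ^ s) * (q y z * (q y z)⁻¹) := by ring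
      _ = Pz z * (f y z / q y z ^ s) := by rw [mul_inv_cancel₀ (hq y z).ne', mul_one]
  rw [← E1, ← E2]
  exact hmain

noncomputable def Pm (P : Z₁ × Z₂ → ℝ) (z₂ : Z₂) : ℝ := ∑ z₁, P (z₁, z₂)

noncomputable def qf (P : Z₁ × Z₂ → ℝ) (p : Y → Z₁ → Z₂ → ℝ) (y : Y) (z₂ : Z₂) : ℝ :=
  ∑ z₁, (P (z₁, z₂) / ∑ z₁', P (z₁', z₂)) * p y z₁ z₂

noncomputable def ff (P : Z₁ × Z₂ → ℝ) (p : Y → Z₁ → Z₂ → ℝ) (α : ℝ) (y : Y) (z₂ : Z₂) : ℝ :=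
  ∑ z₁, (P (z₁, z₂) / ∑ z₁', P (z₁', z₂)) * p y z₁ z₂ ^ α

lemma Iup_def' (P : Z₁ × Z₂ → ℝ) (p : Y → Z₁ → Z₂ → ℝ) (s : ℝ) :
    Iup P p s = (1 / s) * Real.log (∑ z₁, ∑ z₂, P (z₁, z₂) *
      ∑ y, p y z₁ z₂ ^ (1 + s) / qf P p y z₂ ^ s) := rfl

lemma Idown_def' (P : Z₁ × Z₂ → ℝ) (p : Y → Z₁ → Z₂ → ℝ) (α : ℝ) :
    Idown P p α = (α / (α - 1)) * Real.log (∑ z₂, Pm P z₂ *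
      ∑ y, ff P p α y z₂ ^ (1 / α)) := rfl

lemma Iup_arg_eq (P : Z₁ × Z₂ → ℝ) (hPz : ∀ z₂, (0:ℝ) < ∑ z₁, P (z₁, z₂))
    (p : Y → Z₁ → Z₂ → ℝ) (s : ℝ) :
    ∑ z₁, ∑ z₂, P (z₁, z₂) * ∑ y, p y z₁ z₂ ^ (1 + s) / qf P p y z₂ ^ s
      = ∑ z₂, Pm P z₂ * ∑ y, ff P p (1 + s) y z₂ / qf P p y z₂ ^ s := by
  rw [Finset.sum_comm]
  refine Finset.sum_congr rfl fun z₂ _ => ?_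
  simp_rw [Finset.mul_sum]
  rw [Finset.sum_comm]
  refine Finset.sum_congr rfl fun y _ => ?_
  have hkey : Pm P z₂ * ff P p (1 + s) y z₂ = ∑ z₁, P (z₁, z₂) * p y z₁ z₂ ^ (1 + s) := by
    unfold Pm ff
    rw [Finset.mul_sum]
    refine Finset.sum_congr rfl fun z₁ _ => ?_
    field_simp [(hPz z₂).ne']
  calc ∑ z₁, P (z₁, z₂) * (p y z₁ z₂ ^ (1 + s) / qf P p y z₂ ^ s)
      = (∑ z₁, P (z₁, z₂) * p y z₁ z₂ ^ (1 + s)) / qf P p y z₂ ^ s := by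
        rw [Finset.sum_div]
        exact Finset.sum_congr rfl fun z₁ _ => (mul_div_assoc _ _ _).symm
    _ = Pm P z₂ * ff P p (1 + s) y z₂ / qf P p y z₂ ^ s := by rw [hkey]
    _ = Pm P z₂ * (ff P p (1 + s) y z₂ / qf P p y z₂ ^ s) := mul_div_assoc _ _ _

/-- `I_{1+s}^↓(Y;Z₁|Z₂) ≤ I_{1+s}(Y;Z₁|Z₂) ≤ I_{1/(1-s)}^↓(Y;Z₁|Z₂)` for all `s ∈ (0,1)`. -/
theorem Idown_le_Iup_le_Idown
    (P : Z₁ × Z₂ → ℝ) (hP : ∀ z, 0 < P z) (hPs : ∑ z, P z = 1)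
    (p : Y → Z₁ → Z₂ → ℝ) (hp : ∀ y z₁ z₂, 0 < p y z₁ z₂)
    (hps : ∀ z₁ z₂, ∑ y, p y z₁ z₂ = 1)
    (s : ℝ) (hs0 : 0 < s) (hs1 : s < 1) :
    Idown P p (1 + s) ≤ Iup P p s ∧ Iup P p s ≤ Idown P p (1 / (1 - s)) := by
  have hZ : Nonempty (Z₁ × Z₂) := by
    by_contra h
    rw [not_nonempty_iff] at h
    rw [Finset.univ_eq_empty, Finset.sum_empty] at hPs
    norm_num at hPs
  haveI hZ₁ : Nonempty Z₁ := ⟨hZ.some.1⟩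
  haveI hZ₂ : Nonempty Z₂ := ⟨hZ.some.2⟩
  haveI hY : Nonempty Y := by
    by_contra h
    rw [not_nonempty_iff] at h
    have h1 := hps hZ.some.1 hZ.some.2
    rw [Finset.univ_eq_empty, Finset.sum_empty] at h1
    norm_num at h1
  have h1s : (0:ℝ) < 1 + s := by linarith
  have hm1s : (0:ℝ) < 1 - s := by linarith
  have hPz : ∀ z₂, (0:ℝ) < ∑ z₁, P (z₁, z₂) :=
    fun z₂ => Finset.sum_pos (fun i _ => hP _) Finset.univ_nonempty
  have hPm : ∀ z₂, 0 < Pm P z₂ := hPz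
  have hQpos : ∀ z₁ z₂, 0 < P (z₁, z₂) / ∑ z₁', P (z₁', z₂) :=
    fun z₁ z₂ => div_pos (hP _) (hPz z₂)
  have hqf : ∀ y z₂, 0 < qf P p y z₂ := fun y z₂ =>
    Finset.sum_pos (fun z₁ _ => mul_pos (hQpos z₁ z₂) (hp y z₁ z₂)) Finset.univ_nonempty
  have hff : ∀ (α : ℝ) (y : Y) z₂, 0 < ff P p α y z₂ := fun α y z₂ =>
    Finset.sum_pos (fun z₁ _ => mul_pos (hQpos z₁ z₂)
      (Real.rpow_pos_of_pos (hp y z₁ z₂) α)) Finset.univ_nonempty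
  have hPms : ∑ z₂, Pm P z₂ = 1 := by
    unfold Pm
    rw [← Fintype.sum_prod_type_right]
    exact hPs
  have hqfs : ∀ z₂, ∑ y, qf P p y z₂ = 1 := fun z₂ => by
    unfold qf
    rw [Finset.sum_comm]
    have h1 : ∀ z₁, ∑ y, (P (z₁, z₂) / ∑ z₁', P (z₁', z₂)) * p y z₁ z₂
        = P (z₁, z₂) / ∑ z₁', P (z₁', z₂) := fun z₁ => by
      rw [← Finset.mul_sum, hps z₁ z₂, mul_one]
    rw [Finset.sum_congr rfl fun z₁ _ => h1 z₁, ← Finset.sum_div, div_self (hPz z₂).ne']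
  have hApos : 0 < ∑ z₂, Pm P z₂ * ∑ y, ff P p (1 + s) y z₂ / qf P p y z₂ ^ s :=
    Finset.sum_pos (fun z₂ _ => mul_pos (hPm z₂) (Finset.sum_pos (fun y _ =>
      div_pos (hff _ _ _) (Real.rpow_pos_of_pos (hqf y z₂) s)) Finset.univ_nonempty))
      Finset.univ_nonempty
  have hB₁pos : 0 < ∑ z₂, Pm P z₂ * ∑ y, ff P p (1 + s) y z₂ ^ (1 / (1 + s)) :=
    Finset.sum_pos (fun z₂ _ => mul_pos (hPm z₂) (Finset.sum_pos (fun y _ =>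
      Real.rpow_pos_of_pos (hff _ _ _) _) Finset.univ_nonempty)) Finset.univ_nonempty
  have hB₂pos : 0 < ∑ z₂, Pm P z₂ * ∑ y, ff P p (1 / (1 - s)) y z₂ ^ (1 - s) :=
    Finset.sum_pos (fun z₂ _ => mul_pos (hPm z₂) (Finset.sum_pos (fun y _ =>
      Real.rpow_pos_of_pos (hff _ _ _) _) Finset.univ_nonempty)) Finset.univ_nonempty
  have hJ : (∑ z₂, Pm P z₂ * ∑ y, ff P p (1 + s) y z₂ ^ (1 / (1 + s))) ^ (1 + s)
      ≤ ∑ z₂, Pm P z₂ * ∑ y, ff P p (1 + s) y z₂ / qf P p y z₂ ^ s :=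
    aux_jensen (Pm P) (qf P p) (ff P p (1 + s)) (fun z => (hPm z).le) hqf
      (fun y z => (hff _ y z).le) hPms hqfs hs0
  have hH : ∑ z₂, Pm P z₂ * ∑ y, ff P p (1 + s) y z₂ / qf P p y z₂ ^ s
      ≤ ∑ z₂, Pm P z₂ * ∑ y, ff P p (1 / (1 - s)) y z₂ ^ (1 - s) := by
    refine Finset.sum_le_sum fun z₂ _ =>
      mul_le_mul_of_nonneg_left (Finset.sum_le_sum fun y _ => ?_) (hPm z₂).le
    have hhold := aux_holder (fun z₁ => P (z₁, z₂) / ∑ z₁', P (z₁', z₂))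
      (fun z₁ => p y z₁ z₂) (fun z₁ => (hQpos z₁ z₂).le) (fun z₁ => (hp y z₁ z₂).le)
      hs0 hs1 (hff (1 / (1 - s)) y z₂) (hqf y z₂)
    rw [div_le_iff₀ (Real.rpow_pos_of_pos (hqf y z₂) s)]
    exact hhold
  constructor
  · rw [Idown_def', Iup_def', Iup_arg_eq P hPz p s]
    have e : (1 + s) - 1 = s := by ring
    rw [e]
    have hlog : (1 + s) * Real.log (∑ z₂, Pm P z₂ * ∑ y, ff P p (1 + s) y z₂ ^ (1 / (1 + s)))
        ≤ Real.log (∑ z₂, Pm P z₂ * ∑ y, ff P p (1 + s) y z₂ / qf P p y z₂ ^ s) := by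
      rw [← Real.log_rpow hB₁pos]
      exact Real.log_le_log (Real.rpow_pos_of_pos hB₁pos _) hJ
    calc (1 + s) / s * Real.log (∑ z₂, Pm P z₂ * ∑ y, ff P p (1 + s) y z₂ ^ (1 / (1 + s)))
        = (1 / s) * ((1 + s) * Real.log
            (∑ z₂, Pm P z₂ * ∑ y, ff P p (1 + s) y z₂ ^ (1 / (1 + s)))) := by ring
      _ ≤ (1 / s) * Real.log (∑ z₂, Pm P z₂ * ∑ y, ff P p (1 + s) y z₂ / qf P p y z₂ ^ s) :=
          mul_le_mul_of_nonneg_left hlog (one_div_nonneg.mpr hs0.le)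
  · rw [Iup_def', Iup_arg_eq P hPz p s, Idown_def']
    have hexp : 1 / (1 / (1 - s)) = 1 - s := one_div_one_div _
    have hcoef : (1 / (1 - s)) / ((1 / (1 - s)) - 1) = 1 / s := by
      field_simp
      rw [sub_sub_cancel, div_self hs0.ne']
    rw [hexp, hcoef]
    exact mul_le_mul_of_nonneg_left (Real.log_le_log hApos hH) (one_div_nonneg.mpr hs0.le)

end
end

section
/- For the downarrow Rényi conditional mutual information with parameter s > 0, conditioning on an extra variable can only decrease the quantity: exp((s/(1+s)) I₁₊ₛ^↓(Y;Z₁|Z₂,Z₃)) ≤ exp((s/(1+s)) I₁₊ₛ^↓(Y;Z₁,Z₂|Z₃)). -/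
open scoped BigOperators

/-- Conditioning on an extra variable decreases the downarrow Rényi conditional mutual
information: `exp((s/(1+s)) I_{1+s}^↓(Y;Z₁|Z₂,Z₃)) ≤ exp((s/(1+s)) I_{1+s}^↓(Y;Z₁,Z₂|Z₃))`,
written in its explicit exponentiated form for finite alphabets. -/
theorem exp_Idown_cond_le_exp_Idown_joint
    {Y Z₁ Z₂ Z₃ : Type*} [Fintype Y] [Fintype Z₁] [Fintype Z₂] [Fintype Z₃]
    (P : Z₁ × Z₂ × Z₃ → ℝ) (hP : ∀ z, 0 < P z) (hPs : ∑ z, P z = 1)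
    (p : Y → Z₁ → Z₂ → Z₃ → ℝ) (hp : ∀ y z₁ z₂ z₃, 0 < p y z₁ z₂ z₃)
    (hps : ∀ z₁ z₂ z₃, ∑ y, p y z₁ z₂ z₃ = 1)
    (s : ℝ) (hs : 0 < s) :
    ∑ z₂, ∑ z₃, (∑ z₁, P (z₁, z₂, z₃)) *
        ∑ y, (∑ z₁, (P (z₁, z₂, z₃) / ∑ z₁', P (z₁', z₂, z₃)) *
          p y z₁ z₂ z₃ ^ (1 + s)) ^ (1 / (1 + s))
      ≤ ∑ z₃, (∑ z₁, ∑ z₂, P (z₁, z₂, z₃)) *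
          ∑ y, (∑ z₁, ∑ z₂, (P (z₁, z₂, z₃) / ∑ z₁', ∑ z₂', P (z₁', z₂', z₃)) *
            p y z₁ z₂ z₃ ^ (1 + s)) ^ (1 / (1 + s)) := by
  classical
  have hne : Nonempty (Z₁ × Z₂ × Z₃) := by
    rcases isEmpty_or_nonempty (Z₁ × Z₂ × Z₃) with h | h
    · rw [Finset.univ_eq_empty, Finset.sum_empty] at hPs; norm_num at hPs
    · exact h
  haveI : Nonempty Z₁ := ⟨hne.some.1⟩
  haveI : Nonempty Z₂ := ⟨hne.some.2.1⟩
  have hs1 : (0:ℝ) < 1 + s := by linarith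
  have hA : ∀ z₂ z₃, (0:ℝ) < ∑ z₁, P (z₁, z₂, z₃) := fun z₂ z₃ =>
    Finset.sum_pos (fun i _ => hP _) Finset.univ_nonempty
  have hB : ∀ z₃, (0:ℝ) < ∑ z₁, ∑ z₂, P (z₁, z₂, z₃) := fun z₃ =>
    Finset.sum_pos (fun i _ => Finset.sum_pos (fun j _ => hP _) Finset.univ_nonempty)
      Finset.univ_nonempty
  rw [Finset.sum_comm]
  apply Finset.sum_le_sum
  intro z₃ _
  set B : ℝ := ∑ z₁, ∑ z₂, P (z₁, z₂, z₃) with hBdef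
  -- move sums over y outside
  simp_rw [Finset.mul_sum]
  rw [Finset.sum_comm]
  apply Finset.sum_le_sum
  intro y _
  -- core inequality for fixed z₃, y
  set g : Z₂ → ℝ := fun z₂ => ∑ z₁, (P (z₁, z₂, z₃) / ∑ z₁', P (z₁', z₂, z₃)) *
    p y z₁ z₂ z₃ ^ (1 + s) with hgdef
  have hg0 : ∀ z₂, 0 ≤ g z₂ := fun z₂ =>
    Finset.sum_nonneg fun z₁ _ => mul_nonneg (div_nonneg (hP _).le (hA _ _).le)
      (Real.rpow_nonneg (hp _ _ _ _).le _)
  have hw0 : ∀ z₂ ∈ Finset.univ, (0:ℝ) ≤ (∑ z₁, P (z₁, z₂, z₃)) / B := fun z₂ _ =>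
    div_nonneg (hA _ _).le (hB z₃).le
  have hw1 : ∑ z₂, (∑ z₁, P (z₁, z₂, z₃)) / B = 1 := by
    rw [← Finset.sum_div, div_eq_one_iff_eq (hB z₃).ne']
    exact Finset.sum_comm ..
  have key := Real.arith_mean_le_rpow_mean (Finset.univ : Finset Z₂)
    (fun z₂ => (∑ z₁, P (z₁, z₂, z₃)) / B) (fun z₂ => g z₂ ^ (1 / (1 + s)))
    hw0 hw1 (fun z₂ _ => Real.rpow_nonneg (hg0 z₂) _) (by linarith : (1:ℝ) ≤ 1 + s)
  have hsimp : ∀ z₂, (g z₂ ^ (1 / (1 + s))) ^ (1 + s) = g z₂ := by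
    intro z₂
    rw [← Real.rpow_mul (hg0 z₂), one_div, inv_mul_cancel₀ hs1.ne', Real.rpow_one]
  simp only [hsimp] at key
  have hsum : ∑ z₂, ((∑ z₁, P (z₁, z₂, z₃)) / B) * g z₂
      = ∑ z₁, ∑ z₂, (P (z₁, z₂, z₃) / B) * p y z₁ z₂ z₃ ^ (1 + s) := by
    rw [Finset.sum_comm]
    refine Finset.sum_congr rfl fun z₂ _ => ?_
    rw [hgdef, Finset.mul_sum]
    refine Finset.sum_congr rfl fun z₁ _ => ?_
    have hAne : (∑ z₁', P (z₁', z₂, z₃)) ≠ 0 := (hA z₂ z₃).ne'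
    have hBne : B ≠ 0 := (hB z₃).ne'
    field_simp
  calc ∑ z₂, (∑ z₁, P (z₁, z₂, z₃)) * g z₂ ^ (1 / (1 + s))
      = B * ∑ z₂, ((∑ z₁, P (z₁, z₂, z₃)) / B) * g z₂ ^ (1 / (1 + s)) := by
        rw [Finset.mul_sum]
        refine Finset.sum_congr rfl fun z₂ _ => ?_
        rw [← mul_assoc, mul_div_assoc', mul_div_cancel_left₀ _ (hB z₃).ne']
    _ ≤ B * (∑ z₂, ((∑ z₁, P (z₁, z₂, z₃)) / B) * g z₂) ^ (1 / (1 + s)) :=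
        mul_le_mul_of_nonneg_left key (hB z₃).le
    _ = B * (∑ z₁, ∑ z₂, (P (z₁, z₂, z₃) / B) * p y z₁ z₂ z₃ ^ (1 + s)) ^ (1 / (1 + s)) := by
        rw [hsum]
end

section
/- For a symmetric multiple access channel W with c senders, the mutual information between the output Y and the modulo sum X₁ + … + X_c of uniformly distributed independent inputs equals the mutual information of the induced single-sender channel W_S given by W_{S,x} = W_{x,0,…,0} with uniform input. -/
open scoped BigOperators
open Classical

/-- Shannon entropy of a pmf on a finite type (natural log). -/
noncomputable def ent {α : Type*} [Fintype α] (p : α → ℝ) : ℝ :=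
  -∑ a, p a * Real.log (p a)

/-- Mutual information of a joint pmf on `α × β`. -/
noncomputable def mutualInfo {α β : Type*} [Fintype α] [Fintype β] (p : α × β → ℝ) : ℝ :=
  ent (fun a => ∑ b, p (a, b)) + ent (fun b => ∑ a, p (a, b)) - ent p

/-- For a symmetric multiple access channel `W` with `c` senders over a finite field `F`
(input alphabet `V = F^l`), with independent uniform inputs, the mutual information
between the output `Y` and the modulo sum of the inputs equals the mutual information of
the induced single-sender channel `W_S x = W (x,0,…,0)` with uniform input. -/
theorem symmetric_MAC_moduloSum_mutualInfo
    {F : Type*} [Field F] [Fintype F] (l c : ℕ) (hc : 0 < c)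
    {𝒴 : Type*} [Fintype 𝒴]
    (W : (Fin c → (Fin l → F)) → 𝒴 → ℝ)
    (hW0 : ∀ xs y, 0 ≤ W xs y) (hW1 : ∀ xs, ∑ y, W xs y = 1)
    (f : (Fin l → F) → 𝒴 → 𝒴)
    (hf : ∀ x x', f x ∘ f x' = f (x + x')) (hf0 : f 0 = id)
    (hsym : ∀ (x : Fin l → F) (i : Fin c) (xs : Fin c → (Fin l → F)) (y : 𝒴),
      W xs (f x y) = W (Function.update xs i (xs i + x)) y) :
    mutualInfo (fun ys : 𝒴 × (Fin l → F) =>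
        ((Fintype.card (Fin l → F) : ℝ) ^ c)⁻¹ *
          ∑ xs ∈ Finset.univ.filter (fun xs : Fin c → (Fin l → F) => ∑ i, xs i = ys.2),
            W xs ys.1)
      = mutualInfo (fun yx : 𝒴 × (Fin l → F) =>
          ((Fintype.card (Fin l → F) : ℝ))⁻¹ *
            W (Function.update (0 : Fin c → (Fin l → F)) ⟨0, hc⟩ yx.2) yx.1) := by
  classical
  have i₀def : (⟨0, hc⟩ : Fin c) = ⟨0, hc⟩ := rfl
  -- moving mass from coordinate j to i₀ doesn't change the channel
  have move : ∀ (xs : Fin c → (Fin l → F)) (j : Fin c) (y : 𝒴), (⟨0, hc⟩ : Fin c) ≠ j →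
      W xs y = W (Function.update (Function.update xs ⟨0, hc⟩ (xs ⟨0, hc⟩ + xs j)) j 0) y := by
    intro xs j y hij
    have h1 : f (xs j) (f (-(xs j)) y) = y := by
      have h2 : f (xs j) ∘ f (-(xs j)) = id := by rw [hf, add_neg_cancel, hf0]
      exact congrFun h2 y
    calc W xs y = W xs (f (xs j) (f (-(xs j)) y)) := by rw [h1]
      _ = W (Function.update xs ⟨0, hc⟩ (xs ⟨0, hc⟩ + xs j)) (f (-(xs j)) y) := hsym _ _ _ _
      _ = W (Function.update (Function.update xs ⟨0, hc⟩ (xs ⟨0, hc⟩ + xs j)) j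
            ((Function.update xs ⟨0, hc⟩ (xs ⟨0, hc⟩ + xs j)) j + -(xs j))) y := hsym _ _ _ _
      _ = _ := by
            rw [Function.update_of_ne (Ne.symm hij) _ xs, add_neg_cancel]
  -- W is constant on fibers of the sum
  have const : ∀ (xs : Fin c → (Fin l → F)) (y : 𝒴),
      W xs y = W (Function.update (0 : Fin c → (Fin l → F)) ⟨0, hc⟩ (∑ i, xs i)) y := by
    have key : ∀ (n : ℕ) (xs : Fin c → (Fin l → F)),
        (Finset.univ.filter fun j => j ≠ (⟨0, hc⟩ : Fin c) ∧ xs j ≠ 0).card ≤ n → ∀ y,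
        W xs y = W (Function.update (0 : Fin c → (Fin l → F)) ⟨0, hc⟩ (∑ i, xs i)) y := by
      intro n
      induction n with
      | zero =>
        intro xs h y
        have hz : ∀ j, j ≠ (⟨0, hc⟩ : Fin c) → xs j = 0 := by
          intro j hj
          by_contra hne
          have hmem : j ∈ Finset.univ.filter fun j => j ≠ (⟨0, hc⟩ : Fin c) ∧ xs j ≠ 0 := by
            simp [hj, hne]
          have := Finset.card_pos.mpr ⟨j, hmem⟩
          omega
        have hxs : xs = Function.update (0 : Fin c → (Fin l → F)) ⟨0, hc⟩ (xs ⟨0, hc⟩) := by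
          funext k
          by_cases hk : k = (⟨0, hc⟩ : Fin c)
          · subst hk; simp
          · simp [Function.update_of_ne hk, hz k hk]
        have hsum : ∑ i, xs i = xs ⟨0, hc⟩ :=
          Fintype.sum_eq_single _ (fun j hj => hz j hj)
        rw [hsum, ← hxs]
      | succ n ih =>
        intro xs h y
        by_cases hex : ∃ j, j ≠ (⟨0, hc⟩ : Fin c) ∧ xs j ≠ 0
        · obtain ⟨j, hj, hjne⟩ := hex
          set xs' := Function.update (Function.update xs ⟨0, hc⟩ (xs ⟨0, hc⟩ + xs j)) j 0 with hxs'
          have hmove := move xs j y (Ne.symm hj)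
          have hi₀mem : (⟨0, hc⟩ : Fin c) ∈ Finset.univ \ {j} := by
            simp [Ne.symm hj]
          have hsum : ∑ i, xs' i = ∑ i, xs i := by
            rw [hxs']
            rw [Finset.sum_update_of_mem (Finset.mem_univ j), zero_add]
            rw [Finset.sum_update_of_mem hi₀mem]
            have e1 : ∑ i, xs i = xs j + ∑ i ∈ Finset.univ \ {j}, xs i :=
              Finset.sum_eq_add_sum_sdiff_singleton_of_mem (Finset.mem_univ j) _
            have e2 : ∑ i ∈ Finset.univ \ {j}, xs i
                = xs ⟨0, hc⟩ + ∑ i ∈ (Finset.univ \ {j}) \ {(⟨0, hc⟩ : Fin c)}, xs i :=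
              Finset.sum_eq_add_sum_sdiff_singleton_of_mem hi₀mem _
            rw [e1, e2]
            ring
          have hcard : (Finset.univ.filter fun k => k ≠ (⟨0, hc⟩ : Fin c) ∧ xs' k ≠ 0).card ≤ n := by
            have hsub : (Finset.univ.filter fun k => k ≠ (⟨0, hc⟩ : Fin c) ∧ xs' k ≠ 0) ⊆
                (Finset.univ.filter fun k => k ≠ (⟨0, hc⟩ : Fin c) ∧ xs k ≠ 0).erase j := by
              intro k hk
              simp only [Finset.mem_filter, Finset.mem_univ, true_and] at hk
              obtain ⟨hki, hkne⟩ := hk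
              have hkj : k ≠ j := by
                intro hkj; subst hkj
                apply hkne
                simp [hxs']
              refine Finset.mem_erase.mpr ⟨hkj, ?_⟩
              simp only [Finset.mem_filter, Finset.mem_univ, true_and]
              refine ⟨hki, ?_⟩
              have hkk : xs' k = xs k := by
                rw [hxs', Function.update_of_ne hkj, Function.update_of_ne hki]
              rwa [hkk] at hkne
            have hjmem : j ∈ Finset.univ.filter fun k => k ≠ (⟨0, hc⟩ : Fin c) ∧ xs k ≠ 0 := by
              simp [hj, hjne]
            have h1 := Finset.card_le_card hsub
            rw [Finset.card_erase_of_mem hjmem] at h1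
            have h2 := Finset.card_pos.mpr ⟨j, hjmem⟩
            omega
          rw [hmove, ih xs' hcard y, hsum]
        · push_neg at hex
          have hz : ∀ j, j ≠ (⟨0, hc⟩ : Fin c) → xs j = 0 := hex
          have hxs : xs = Function.update (0 : Fin c → (Fin l → F)) ⟨0, hc⟩ (xs ⟨0, hc⟩) := by
            funext k
            by_cases hk : k = (⟨0, hc⟩ : Fin c)
            · subst hk; simp
            · simp [Function.update_of_ne hk, hz k hk]
          have hsum : ∑ i, xs i = xs ⟨0, hc⟩ :=
            Fintype.sum_eq_single _ (fun j hj => hz j hj)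
          rw [hsum, ← hxs]
    intro xs y
    exact key _ xs le_rfl y
  -- cardinality of fibers
  have hq0 : 0 < Fintype.card (Fin l → F) := Fintype.card_pos
  set N : ℕ := (Finset.univ.filter fun xs : Fin c → (Fin l → F) => ∑ i, xs i = 0).card with hN
  have hsumδ : ∀ s : Fin l → F,
      ∑ i, Function.update (0 : Fin c → (Fin l → F)) ⟨0, hc⟩ s i = s := by
    intro s
    rw [Fintype.sum_eq_single (⟨0, hc⟩ : Fin c) (fun j hj => Function.update_of_ne hj _ _)]
    simp
  have hfib : ∀ s : Fin l → F,
      (Finset.univ.filter fun xs : Fin c → (Fin l → F) => ∑ i, xs i = s).card = N := by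
    intro s
    rw [hN]
    apply Finset.card_bij'
      (fun xs _ => xs - Function.update (0 : Fin c → (Fin l → F)) ⟨0, hc⟩ s)
      (fun xs _ => xs + Function.update (0 : Fin c → (Fin l → F)) ⟨0, hc⟩ s)
    · intro xs hxs
      simp only [Finset.mem_filter, Finset.mem_univ, true_and, Pi.sub_apply] at hxs ⊢
      rw [Finset.sum_sub_distrib, hxs, hsumδ, sub_self]
    · intro xs hxs
      simp only [Finset.mem_filter, Finset.mem_univ, true_and, Pi.add_apply] at hxs ⊢
      rw [Finset.sum_add_distrib, hxs, hsumδ, zero_add]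
    · intro xs _; simp
    · intro xs _; simp
  have hqc : Fintype.card (Fin l → F) ^ c = Fintype.card (Fin l → F) * N := by
    have h2 : (Finset.univ : Finset (Fin c → (Fin l → F))).card
        = ∑ s : Fin l → F,
          (Finset.univ.filter fun xs : Fin c → (Fin l → F) => ∑ i, xs i = s).card :=
      Finset.card_eq_sum_card_fiberwise (fun x _ => Finset.mem_univ _)
    simp only [hfib, Finset.sum_const, Finset.card_univ, smul_eq_mul] at h2
    rw [← h2]; simp [Fintype.card_fun]
  -- the two joint pmfs coincide
  have hpmf : (fun ys : 𝒴 × (Fin l → F) =>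
        ((Fintype.card (Fin l → F) : ℝ) ^ c)⁻¹ *
          ∑ xs ∈ Finset.univ.filter (fun xs : Fin c → (Fin l → F) => ∑ i, xs i = ys.2),
            W xs ys.1)
      = (fun yx : 𝒴 × (Fin l → F) =>
          ((Fintype.card (Fin l → F) : ℝ))⁻¹ *
            W (Function.update (0 : Fin c → (Fin l → F)) ⟨0, hc⟩ yx.2) yx.1) := by
    funext ys
    obtain ⟨y, s⟩ := ys
    have hterm : ∑ xs ∈ Finset.univ.filter (fun xs : Fin c → (Fin l → F) => ∑ i, xs i = s),
        W xs y = N * W (Function.update (0 : Fin c → (Fin l → F)) ⟨0, hc⟩ s) y := by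
      rw [← hfib s]
      rw [Finset.sum_congr rfl (fun xs hxs => ?_), Finset.sum_const, nsmul_eq_mul]
      simp only [Finset.mem_filter, Finset.mem_univ, true_and] at hxs
      rw [const xs y, hxs]
    simp only
    rw [hterm]
    have hqR : ((Fintype.card (Fin l → F) : ℝ)) ≠ 0 := Nat.cast_ne_zero.mpr hq0.ne'
    have hNpos : 0 < N := by
      rcases Nat.eq_zero_or_pos N with h0 | h
      · exfalso
        have hp := pow_pos hq0 c
        rw [hqc, h0, Nat.mul_zero] at hp
        exact lt_irrefl 0 hp
      · exact h
    have hNR : (N : ℝ) ≠ 0 := Nat.cast_ne_zero.mpr hNpos.ne'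
    have hqcR : ((Fintype.card (Fin l → F) : ℝ)) ^ c
        = (Fintype.card (Fin l → F) : ℝ) * N := by
      rw [← Nat.cast_pow, hqc]; push_cast; ring
    rw [hqcR, mul_inv]
    field_simp
  rw [hpmf]
end

section
/- For a symmetric multiple access channel W with independent uniform inputs X₁, …, X_c, the output Y is independent of (X₁, …, X_{c-1}) given the modulo sum X₁ + … + X_c; in particular I(Y; X₁,…,X_{c-1} | X₁+…+X_c) = 0. -/
/-!
Symmetry lets every input `xᵢ` be moved onto the output through the action, so
`W xs y = W 0 (f (∑ i, xs i) y)`: the channel only sees the sum of its inputs. Writing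
`X_c = S - ∑_{j<c} X_j`, the joint law of `(Y, X₁, …, X_{c-1}, S)` is therefore a function of
`(Y, S)` alone, and for such a law the four entropies in `I(Y; X₁, …, X_{c-1} | S)` cancel out.
-/

open scoped BigOperators

/-- Conditional mutual information `I(X;Y|Z)` of a joint pmf on `α × β × γ`. -/
noncomputable def condMI {α β γ : Type*} [Fintype α] [Fintype β] [Fintype γ]
    (p : α × β × γ → ℝ) : ℝ :=
  ent (fun ac : α × γ => ∑ b, p (ac.1, b, ac.2))
  + ent (fun bc : β × γ => ∑ a, p (a, bc.1, bc.2))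
  - ent (fun c : γ => ∑ a, ∑ b, p (a, b, c))
  - ent p

open Real

section entropy

variable {α β γ : Type*} [Fintype α] [Fintype β] [Fintype γ]

theorem ent_eq_sum_negMulLog (p : α → ℝ) : ent p = ∑ a, negMulLog (p a) := by
  simp only [ent, negMulLog, neg_mul, Finset.sum_neg_distrib]

theorem ent_const_mul (B : ℝ) (q : α → ℝ) :
    ent (fun a => B * q a) = negMulLog B * ∑ a, q a + B * ent q := by
  simp only [ent_eq_sum_negMulLog, negMulLog_mul, Finset.sum_add_distrib, Finset.mul_sum,
    mul_comm (q _)]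

theorem ent_comp_snd (q : γ → ℝ) :
    ent (fun x : β × γ => q x.2) = Fintype.card β * ent q := by
  simp only [ent_eq_sum_negMulLog, Fintype.sum_prod_type, Finset.sum_const, Finset.card_univ,
    nsmul_eq_mul]

theorem ent_comp_fst_snd (q : α × γ → ℝ) :
    ent (fun x : α × β × γ => q (x.1, x.2.2)) = Fintype.card β * ent q := by
  rw [← ent_comp_snd (β := β) q, ent, ent]
  congr 1
  exact Fintype.sum_equiv ⟨fun x => (x.2.1, x.1, x.2.2), fun y => (y.2.1, y.1, y.2.2),
    fun _ => rfl, fun _ => rfl⟩ _ _ fun _ => rfl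

theorem condMI_comp_fst_snd (q : α × γ → ℝ) :
    condMI (fun x : α × β × γ => q (x.1, x.2.2)) = 0 := by
  set B : ℝ := (Fintype.card β : ℝ)
  set r : γ → ℝ := fun c => ∑ a, q (a, c)
  have hsum : ∑ c, r c = ∑ x, q x := by
    rw [Fintype.sum_prod_type, Finset.sum_comm]
  have hac : ent (fun x : α × γ => ∑ _b : β, q (x.1, x.2)) =
      negMulLog B * ∑ x, q x + B * ent q := by
    simp only [Finset.sum_const, Finset.card_univ, nsmul_eq_mul, ent_const_mul]
    rfl
  have hbc : ent (fun x : β × γ => ∑ a, q (a, x.2)) = B * ent r := ent_comp_snd r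
  have hcc : ent (fun c : γ => ∑ a, ∑ _b : β, q (a, c)) =
      negMulLog B * ∑ c, r c + B * ent r := by
    simp only [Finset.sum_const, Finset.card_univ, nsmul_eq_mul, ← Finset.mul_sum, ent_const_mul]
    rfl
  rw [condMI, hac, hbc, hcc, ent_comp_fst_snd, hsum]
  ring

end entropy

section channel

variable {ι V 𝒴 R : Type*} [DecidableEq ι] [AddCommMonoid V]

theorem channel_eq_piecewise_zero (W : (ι → V) → 𝒴 → R) (f : V → 𝒴 → 𝒴)
    (hf : ∀ x x', f x ∘ f x' = f (x + x')) (hf0 : f 0 = id)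
    (hsym : ∀ (x : V) (i : ι) (xs : ι → V) (y : 𝒴),
      W xs (f x y) = W (Function.update xs i (xs i + x)) y)
    (T : Finset ι) (xs : ι → V) (y : 𝒴) :
    W xs y = W (T.piecewise (0 : ι → V) xs) (f (∑ i ∈ T, xs i) y) := by
  induction T using Finset.induction_on generalizing y with
  | empty => simp [hf0]
  | @insert a T ha ih =>
    have hzs : T.piecewise (0 : ι → V) xs a = xs a := T.piecewise_eq_of_notMem _ _ ha
    have hmove : ∀ y', W (T.piecewise (0 : ι → V) xs) y' =
        W ((insert a T).piecewise (0 : ι → V) xs) (f (xs a) y') := by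
      intro y'
      rw [Finset.piecewise_insert, Pi.zero_apply, hsym, Function.update_idem,
        Function.update_self, zero_add, ← hzs, Function.update_eq_self]
    rw [ih, hmove, ← Function.comp_apply (f := f (xs a)), hf, Finset.sum_insert ha]

theorem channel_eq_zero_act_sum [Fintype ι] (W : (ι → V) → 𝒴 → R) (f : V → 𝒴 → 𝒴)
    (hf : ∀ x x', f x ∘ f x' = f (x + x')) (hf0 : f 0 = id)
    (hsym : ∀ (x : V) (i : ι) (xs : ι → V) (y : 𝒴),
      W xs (f x y) = W (Function.update xs i (xs i + x)) y)
    (xs : ι → V) (y : 𝒴) :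
    W xs y = W 0 (f (∑ i, xs i) y) := by
  rw [channel_eq_piecewise_zero W f hf hf0 hsym Finset.univ, Finset.piecewise_univ]

end channel

def completeWithSum {V : Type*} [AddCommGroup V] {c : ℕ} (v : Fin (c - 1) → V) (s : V) :
    Fin c → V :=
  fun i => if h : (i : ℕ) < c - 1 then v ⟨i, h⟩ else s - ∑ j, v j

theorem sum_completeWithSum {V : Type*} [AddCommGroup V] {c : ℕ} (hc : 0 < c)
    (v : Fin (c - 1) → V) (s : V) : ∑ i, completeWithSum v s i = s := by
  obtain ⟨m, rfl⟩ : ∃ m, c = m + 1 := ⟨c - 1, by omega⟩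
  rw [Fin.sum_univ_castSucc]
  simp [completeWithSum]

theorem channel_completeWithSum_eq {V 𝒴 R : Type*} [AddCommGroup V] {c : ℕ}
    (W : (Fin c → V) → 𝒴 → R) (f : V → 𝒴 → 𝒴)
    (hf : ∀ x x', f x ∘ f x' = f (x + x')) (hf0 : f 0 = id)
    (hsym : ∀ (x : V) (i : Fin c) (xs : Fin c → V) (y : 𝒴),
      W xs (f x y) = W (Function.update xs i (xs i + x)) y)
    (v v' : Fin (c - 1) → V) (s : V) (y : 𝒴) :
    W (completeWithSum v s) y = W (completeWithSum v' s) y := by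
  rcases Nat.eq_zero_or_pos c with rfl | hc
  · rw [Subsingleton.elim (completeWithSum v s) (completeWithSum v' s)]
  · rw [channel_eq_zero_act_sum W f hf hf0 hsym (completeWithSum v s),
      channel_eq_zero_act_sum W f hf hf0 hsym (completeWithSum v' s),
      sum_completeWithSum hc, sum_completeWithSum hc]

theorem symmetric_MAC_security_general
    {F : Type*} [Field F] [Fintype F] (l c : ℕ)
    {𝒴 : Type*} [Fintype 𝒴]
    (W : (Fin c → (Fin l → F)) → 𝒴 → ℝ)
    (f : (Fin l → F) → 𝒴 → 𝒴)
    (hf : ∀ x x', f x ∘ f x' = f (x + x')) (hf0 : f 0 = id)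
    (hsym : ∀ (x : Fin l → F) (i : Fin c) (xs : Fin c → (Fin l → F)) (y : 𝒴),
      W xs (f x y) = W (Function.update xs i (xs i + x)) y) :
    condMI (fun yvs : 𝒴 × (Fin (c - 1) → (Fin l → F)) × (Fin l → F) =>
        ((Fintype.card (Fin l → F) : ℝ) ^ c)⁻¹ *
          W (fun i : Fin c => if h : (i : ℕ) < c - 1 then yvs.2.1 ⟨i, h⟩
              else yvs.2.2 - ∑ j, yvs.2.1 j)
            yvs.1)
      = 0 := by
  convert condMI_comp_fst_snd (β := Fin (c - 1) → Fin l → F) fun ys : 𝒴 × (Fin l → F) =>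
    ((Fintype.card (Fin l → F) : ℝ) ^ c)⁻¹ * W (completeWithSum 0 ys.2) ys.1 using 2
  funext ⟨y, v, s⟩
  exact congrArg _ (channel_completeWithSum_eq W f hf hf0 hsym v 0 s y)

/-- For a symmetric MAC `W` with i.i.d. uniform inputs `X₁,…,X_c` on `V = F^l`,
the output `Y` is conditionally independent of `(X₁,…,X_{c-1})` given the modulo sum
`S = X₁ + ⋯ + X_c`: the conditional mutual information `I(Y; X₁,…,X_{c-1} | S)`
of the induced joint distribution vanishes. -/
theorem symmetric_MAC_security
    {F : Type*} [Field F] [Fintype F] (l c : ℕ) (hc : 0 < c)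
    {𝒴 : Type*} [Fintype 𝒴]
    (W : (Fin c → (Fin l → F)) → 𝒴 → ℝ)
    (hW0 : ∀ xs y, 0 ≤ W xs y) (hW1 : ∀ xs, ∑ y, W xs y = 1)
    (f : (Fin l → F) → 𝒴 → 𝒴)
    (hf : ∀ x x', f x ∘ f x' = f (x + x')) (hf0 : f 0 = id)
    (hsym : ∀ (x : Fin l → F) (i : Fin c) (xs : Fin c → (Fin l → F)) (y : 𝒴),
      W xs (f x y) = W (Function.update xs i (xs i + x)) y) :
    condMI (fun yvs : 𝒴 × (Fin (c - 1) → (Fin l → F)) × (Fin l → F) =>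
        ((Fintype.card (Fin l → F) : ℝ) ^ c)⁻¹ *
          W (fun i : Fin c => if h : (i : ℕ) < c - 1 then yvs.2.1 ⟨i, h⟩
              else yvs.2.2 - ∑ j, yvs.2.1 j)
            yvs.1)
      = 0 :=
  symmetric_MAC_security_general l c W f hf hf0 hsym
end
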